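/- Soundness of S3VML–I: for any set Γ of 3VML-formulas and any 3VML-formula A, if Γ ⊢_I A then Γ ⊨_I A. -/

import Mathlib

/-- The three truth values of three-valued logic. -/
inductive TV : Type
  | T : TV
  | U : TV
  | F : TV
deriving DecidableEq

open TV

/-- Weak Kleene negation. -/
def negTV : TV → TV
  | T => F
  | U => U
  | F => T

/-- Weak Kleene conjunction (`U` is infectious, otherwise classical). -/
def andTV : TV → TV → TV
  | U, _ => U
  | _, U => U
  | T, T => T
  | _, _ => F

/-- Weak Kleene disjunction (`U` is infectious, otherwise classical). -/
def orTV : TV → TV → TV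
  | U, _ => U
  | _, U => U
  | F, F => F
  | _, _ => T

/-- Formulas of the modal language 3VML. -/
inductive Form (P : Type) : Type
  | atom : P → Form P
  | neg : Form P → Form P
  | conj : Form P → Form P → Form P
  | disj : Form P → Form P → Form P
  | box : Form P → Form P

/-- The natural deduction proof system S3VML–I.  `DerI Γ A` means `Γ ⊢_I A`. -/
inductive DerI {P : Type} : Set (Form P) → Form P → Prop
  | mem {Γ : Set (Form P)} {A : Form P} : A ∈ Γ → DerI Γ A
  | weaken {Γ Δ : Set (Form P)} {A : Form P} : Γ ⊆ Δ → DerI Γ A → DerI Δ A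
  | efq {Γ : Set (Form P)} {A B : Form P} :
      DerI Γ A → DerI Γ (.neg A) → DerI Γ B
  | nnI {Γ : Set (Form P)} {A : Form P} : DerI Γ A → DerI Γ (.neg (.neg A))
  | nnE {Γ : Set (Form P)} {A : Form P} : DerI Γ (.neg (.neg A)) → DerI Γ A
  | orI1 {Γ : Set (Form P)} {A B : Form P} :
      DerI Γ (.conj (.neg A) B) → DerI Γ (.disj A B)
  | orI2 {Γ : Set (Form P)} {A B : Form P} :
      DerI Γ (.conj A (.neg B)) → DerI Γ (.disj A B)
  | orI3 {Γ : Set (Form P)} {A B : Form P} :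
      DerI Γ (.conj A B) → DerI Γ (.disj A B)
  | orE {Γ : Set (Form P)} {A B C : Form P} :
      DerI Γ (.disj A B) →
      DerI (insert (.conj A B) Γ) C →
      DerI (insert (.conj A (.neg B)) Γ) C →
      DerI (insert (.conj (.neg A) B) Γ) C →
      DerI Γ C
  | andI {Γ : Set (Form P)} {A B : Form P} :
      DerI Γ A → DerI Γ B → DerI Γ (.conj A B)
  | andE1 {Γ : Set (Form P)} {A B : Form P} : DerI Γ (.conj A B) → DerI Γ A
  | andE2 {Γ : Set (Form P)} {A B : Form P} : DerI Γ (.conj A B) → DerI Γ B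
  | boxI {Γ : Set (Form P)} {A : Form P} :
      DerI Γ A → DerI (Form.box '' Γ) (.box A)
  | nOrI {Γ : Set (Form P)} {A B : Form P} :
      DerI Γ (.conj (.neg A) (.neg B)) → DerI Γ (.neg (.disj A B))
  | nOrE {Γ : Set (Form P)} {A B : Form P} :
      DerI Γ (.neg (.disj A B)) → DerI Γ (.conj (.neg A) (.neg B))
  | nAndI {Γ : Set (Form P)} {A B : Form P} :
      DerI Γ (.disj (.neg A) (.neg B)) → DerI Γ (.neg (.conj A B))
  | nAndE {Γ : Set (Form P)} {A B : Form P} :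
      DerI Γ (.neg (.conj A B)) → DerI Γ (.disj (.neg A) (.neg B))
  | nBoxI {Γ : Set (Form P)} {A : Form P} :
      DerI Γ (.box (.disj A (.neg A))) →
      DerI Γ (.disj (.box A) (.neg (.box A)))
  | nBoxE {Γ : Set (Form P)} {A : Form P} :
      DerI Γ (.disj (.box A) (.neg (.box A))) →
      DerI Γ (.box (.disj A (.neg A)))

/-- A three-valued Kripke model: worlds, an accessibility relation and a
three-valued valuation.  (Pointed models always have a world, so allowing an
empty carrier does not change the semantic consequence relation.) -/
structure KModel (P : Type) where
  S : Type
  R : S → S → Prop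
  V : S → P → TV

open Classical in
/-- Semantics I: the three-valued valuation of a formula at a world,
with the weak Kleene clauses for the propositional connectives and the
deontic/temporal clause for `□`. -/
noncomputable def ValI {P : Type} (M : KModel P) : Form P → M.S → TV
  | .atom p, s => M.V s p
  | .neg A, s => negTV (ValI M A s)
  | .conj A B, s => andTV (ValI M A s) (ValI M B s)
  | .disj A B, s => orTV (ValI M A s) (ValI M B s)
  | .box A, s =>
      if ∀ t, M.R s t → ValI M A t = TV.T then TV.T
      else if ∃ t, M.R s t ∧ ValI M A t = TV.U then TV.U
      else TV.F

/-- `M,s ⊨_I A` iff `Val^M_I(s,A) = T`. -/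
def SatI {P : Type} (M : KModel P) (s : M.S) (A : Form P) : Prop :=
  ValI M A s = TV.T

/-- Semantic consequence `Γ ⊨_I A` over all pointed three-valued Kripke models. -/
def ConsqI {P : Type} (Γ : Set (Form P)) (A : Form P) : Prop :=
  ∀ (M : KModel P) (s : M.S), (∀ B ∈ Γ, SatI M s B) → SatI M s A

/-- Soundness of S3VML–I: if `Γ ⊢_I A` then `Γ ⊨_I A`. -/
theorem soundness_I (P : Type) [Countable P] [Nonempty P]
    (Γ : Set (Form P)) (A : Form P) (h : DerI Γ A) : ConsqI Γ A := by
  induction h with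
  | mem hA => exact fun M s hΓ => hΓ _ hA
  | weaken hsub _ ih => exact fun M s hΓ => ih M s fun B hB => hΓ B (hsub hB)
  | @efq Γ' A' B' _ _ ih1 ih2 =>
      intro M s hΓ
      have h1 := ih1 M s hΓ
      have h2 := ih2 M s hΓ
      simp only [SatI, ValI] at h1 h2
      rw [h1] at h2; exact absurd h2 (by decide)
  | @nnI Γ' A' _ ih =>
      intro M s hΓ
      have h1 := ih M s hΓ
      simp only [SatI, ValI] at *
      rw [h1]; rfl
  | @nnE Γ' A' _ ih =>
      intro M s hΓ
      have h1 := ih M s hΓ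
      simp only [SatI, ValI] at *
      cases hv : ValI M A' s <;> rw [hv] at h1 <;> first | rfl | exact absurd h1 (by decide)
  | @orI1 Γ' A' B' _ ih =>
      intro M s hΓ
      have h1 := ih M s hΓ
      simp only [SatI, ValI] at *
      cases hv : ValI M A' s <;> cases hw : ValI M B' s <;>
        rw [hv, hw] at h1 <;> first | rfl | exact absurd h1 (by decide)
  | @orI2 Γ' A' B' _ ih =>
      intro M s hΓ
      have h1 := ih M s hΓ
      simp only [SatI, ValI] at *
      cases hv : ValI M A' s <;> cases hw : ValI M B' s <;>
        rw [hv, hw] at h1 <;> first | rfl | exact absurd h1 (by decide)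
  | @orI3 Γ' A' B' _ ih =>
      intro M s hΓ
      have h1 := ih M s hΓ
      simp only [SatI, ValI] at *
      cases hv : ValI M A' s <;> cases hw : ValI M B' s <;>
        rw [hv, hw] at h1 <;> first | rfl | exact absurd h1 (by decide)
  | @orE Γ' A' B' C' _ _ _ _ ih0 ih1 ih2 ih3 =>
      intro M s hΓ
      have h0 := ih0 M s hΓ
      simp only [SatI, ValI] at h0
      cases hv : ValI M A' s <;> cases hw : ValI M B' s <;>
        rw [hv, hw] at h0 <;> try exact absurd h0 (by decide)
      · exact ih1 M s (by
          intro D hD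
          rcases hD with rfl | hD
          · simp [SatI, ValI, hv, hw, andTV]
          · exact hΓ _ hD)
      · exact ih2 M s (by
          intro D hD
          rcases hD with rfl | hD
          · simp [SatI, ValI, hv, hw, andTV, negTV]
          · exact hΓ _ hD)
      · exact ih3 M s (by
          intro D hD
          rcases hD with rfl | hD
          · simp [SatI, ValI, hv, hw, andTV, negTV]
          · exact hΓ _ hD)
  | @andI Γ' A' B' _ _ ih1 ih2 =>
      intro M s hΓ
      have h1 := ih1 M s hΓ
      have h2 := ih2 M s hΓ
      simp only [SatI, ValI] at *
      rw [h1, h2]; rfl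
  | @andE1 Γ' A' B' _ ih =>
      intro M s hΓ
      have h1 := ih M s hΓ
      simp only [SatI, ValI] at *
      cases hv : ValI M A' s <;> cases hw : ValI M B' s <;>
        rw [hv, hw] at h1 <;> first | rfl | exact absurd h1 (by decide)
  | @andE2 Γ' A' B' _ ih =>
      intro M s hΓ
      have h1 := ih M s hΓ
      simp only [SatI, ValI] at *
      cases hv : ValI M A' s <;> cases hw : ValI M B' s <;>
        rw [hv, hw] at h1 <;> first | rfl | exact absurd h1 (by decide)
  | @boxI Γ' A' _ ih =>
      intro M s hΓ
      have hall : ∀ t, M.R s t → ValI M A' t = TV.T := by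
        intro t hst
        refine ih M t (fun B hB => ?_)
        have hb := hΓ _ ⟨B, hB, rfl⟩
        simp only [SatI, ValI] at hb ⊢
        by_cases hc : ∀ u, M.R s u → ValI M B u = TV.T
        · exact hc t hst
        · rw [if_neg hc] at hb; split at hb <;> exact absurd hb (by decide)
      simp only [SatI, ValI, if_pos hall]
  | @nOrI Γ' A' B' _ ih =>
      intro M s hΓ
      have h1 := ih M s hΓ
      simp only [SatI, ValI] at *
      cases hv : ValI M A' s <;> cases hw : ValI M B' s <;>
        rw [hv, hw] at h1 <;> first | rfl | exact absurd h1 (by decide)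
  | @nOrE Γ' A' B' _ ih =>
      intro M s hΓ
      have h1 := ih M s hΓ
      simp only [SatI, ValI] at *
      cases hv : ValI M A' s <;> cases hw : ValI M B' s <;>
        rw [hv, hw] at h1 <;> first | rfl | exact absurd h1 (by decide)
  | @nAndI Γ' A' B' _ ih =>
      intro M s hΓ
      have h1 := ih M s hΓ
      simp only [SatI, ValI] at *
      cases hv : ValI M A' s <;> cases hw : ValI M B' s <;>
        rw [hv, hw] at h1 <;> first | rfl | exact absurd h1 (by decide)
  | @nAndE Γ' A' B' _ ih =>
      intro M s hΓ
      have h1 := ih M s hΓ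
      simp only [SatI, ValI] at *
      cases hv : ValI M A' s <;> cases hw : ValI M B' s <;>
        rw [hv, hw] at h1 <;> first | rfl | exact absurd h1 (by decide)
  | @nBoxI Γ' A' _ ih =>
      intro M s hΓ
      have h1 := ih M s hΓ
      simp only [SatI, ValI] at h1 ⊢
      have hne : ¬ ∃ t, M.R s t ∧ ValI M A' t = TV.U := by
        rintro ⟨t, hst, hU⟩
        by_cases hall : ∀ t, M.R s t → orTV (ValI M A' t) (negTV (ValI M A' t)) = TV.T
        · have := hall t hst; rw [hU] at this; exact absurd this (by decide)
        · have h2 := (if_neg hall).symm.trans h1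
          by_cases he : ∃ t, M.R s t ∧ orTV (ValI M A' t) (negTV (ValI M A' t)) = TV.U
          · exact absurd ((if_pos he).symm.trans h2) (by decide)
          · exact absurd ((if_neg he).symm.trans h2) (by decide)
      by_cases hall : ∀ t, M.R s t → ValI M A' t = TV.T
      · rw [if_pos hall]; rfl
      · rw [if_neg hall, if_neg hne]; rfl
  | @nBoxE Γ' A' _ ih =>
      intro M s hΓ
      have h1 := ih M s hΓ
      simp only [SatI, ValI] at h1 ⊢
      have key : ∀ t, M.R s t → orTV (ValI M A' t) (negTV (ValI M A' t)) = TV.T := by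
        intro t hst
        have hU : ValI M A' t ≠ TV.U := by
          intro hU
          by_cases hall : ∀ u, M.R s u → ValI M A' u = TV.T
          · have := hall t hst; rw [hU] at this; exact absurd this (by decide)
          · rw [if_neg hall, if_pos ⟨t, hst, hU⟩] at h1
            exact absurd h1 (by decide)
        cases hv : ValI M A' t <;> first | rfl | exact absurd hv hU
      exact if_pos key
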